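/- Let A and B be n×n complex positive definite matrices with A ≤ B in the Loewner order, and let p ∈ (0,1]. Then L_p(A,B) + K_p(A,B) ≤ T_p(A|B) ≤ R_p(A,B) + K_p(A,B) in the Loewner order, where L_p(A,B) := (1/24)·(p−1)·(p−2)·(A #_p B − 3·A ♮_{p−1} B + 3·A ♮_{p−2} B − A ♮_{p−3} B) and R_p(A,B) := (1/24)·(p−1)·(p−2)·(A ♮_3 B − 3·A ♮_2 B + 3·B − A). -/

import Mathlib

open Matrix ComplexOrder

/-- Real power of a (Hermitian) complex matrix via the continuous functional calculus,
corresponding to `Matrix.PosDef.rpow` on positive definite matrices. -/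
noncomputable def mrpow {n : Type*} [Fintype n] [DecidableEq n]
    (A : Matrix n n ℂ) (r : ℝ) : Matrix n n ℂ :=
  cfc (fun t : ℝ => t ^ r) A

/-- The Loewner order: `loe X Y` means `Y - X` is positive semidefinite. -/
def loe {n : Type*} [Fintype n] (X Y : Matrix n n ℂ) : Prop :=
  (Y - X).PosSemidef

/-- `A ♮ᵣ B = A^{1/2} (A^{-1/2} B A^{-1/2})^r A^{1/2}`; for `r ∈ [0,1]` this is the
weighted geometric mean `A #ᵣ B`. -/
noncomputable def natu {n : Type*} [Fintype n] [DecidableEq n]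
    (A B : Matrix n n ℂ) (r : ℝ) : Matrix n n ℂ :=
  mrpow A (1 / 2) * mrpow (mrpow A (-(1 / 2)) * B * mrpow A (-(1 / 2))) r * mrpow A (1 / 2)

/-- The Tsallis relative operator entropy `T_p(A|B) = (A #_p B - A) / p`. -/
noncomputable def TsallisEntropy {n : Type*} [Fintype n] [DecidableEq n]
    (A B : Matrix n n ℂ) (p : ℝ) : Matrix n n ℂ :=
  (1 / p : ℝ) • (natu A B p - A)

/-- `K_p(A,B) = A^{1/2} ((A^{-1/2} B A^{-1/2} + I)/2)^{p-1} (A^{-1/2} B A^{-1/2} - I) A^{1/2}`. -/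
noncomputable def Kp {n : Type*} [Fintype n] [DecidableEq n]
    (A B : Matrix n n ℂ) (p : ℝ) : Matrix n n ℂ :=
  mrpow A (1 / 2) *
    mrpow ((1 / 2 : ℝ) • (mrpow A (-(1 / 2)) * B * mrpow A (-(1 / 2)) + 1)) (p - 1) *
    (mrpow A (-(1 / 2)) * B * mrpow A (-(1 / 2)) - 1) * mrpow A (1 / 2)

/-- `J_p(A,B) = (1/2)(A #_p B - A ♮_{p-1} B + B - A)`. -/
noncomputable def Jp {n : Type*} [Fintype n] [DecidableEq n]
    (A B : Matrix n n ℂ) (p : ℝ) : Matrix n n ℂ :=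
  (1 / 2 : ℝ) • (natu A B p - natu A B (p - 1) + B - A)

/-- `L_p(A,B) = (1/24)(p-1)(p-2)(A #_p B - 3 A ♮_{p-1} B + 3 A ♮_{p-2} B - A ♮_{p-3} B)`. -/
noncomputable def Lp {n : Type*} [Fintype n] [DecidableEq n]
    (A B : Matrix n n ℂ) (p : ℝ) : Matrix n n ℂ :=
  ((1 / 24) * (p - 1) * (p - 2) : ℝ) •
    (natu A B p - (3 : ℝ) • natu A B (p - 1) + (3 : ℝ) • natu A B (p - 2) - natu A B (p - 3))

/-- `R_p(A,B) = (1/24)(p-1)(p-2)(A ♮_3 B - 3 A ♮_2 B + 3 B - A)`. -/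
noncomputable def Rp {n : Type*} [Fintype n] [DecidableEq n]
    (A B : Matrix n n ℂ) (p : ℝ) : Matrix n n ℂ :=
  ((1 / 24) * (p - 1) * (p - 2) : ℝ) •
    (natu A B 3 - (3 : ℝ) • natu A B 2 + (3 : ℝ) • B - A)

/-!
With `C = A^{-1/2} B A^{-1/2}`, every matrix in the statement has the form
`A^{1/2} f(C) A^{1/2}` for an explicit scalar function `f`, and `A ≤ B` means `C ≥ 1`. So both
inequalities reduce to scalar inequalities on `[1, ∞)`. These are the error bounds of the midpoint
rule for `∫₁ˣ t^{p-1} dt = (x^p - 1)/p`, whose integrand has second derivative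
`(p-1)(p-2) t^{p-3}`, squeezed between `(p-1)(p-2) x^{p-3}` and `(p-1)(p-2)` on `[1, x]`.
-/

section Midpoint

open Set intervalIntegral MeasureTheory

theorem ConvexOn.mul_midpoint_le_integral {g : ℝ → ℝ} {a b : ℝ} (hab : a ≤ b)
    (hg : ConvexOn ℝ (Icc a b) g) (hint : IntervalIntegrable g volume a b) :
    (b - a) * g ((a + b) / 2) ≤ ∫ x in a..b, g x := by
  have hint' : IntervalIntegrable (fun x => g (a + b - x)) volume a b := by
    simpa using (hint.comp_sub_left (a + b)).symm
  have hpoint : ∀ x ∈ Icc a b, g ((a + b) / 2) ≤ (g x + g (a + b - x)) / 2 := by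
    intro x hx
    have hx' : a + b - x ∈ Icc a b := ⟨by linarith [hx.2], by linarith [hx.1]⟩
    have := hg.2 hx hx' (show (0 : ℝ) ≤ 1 / 2 by norm_num) (show (0 : ℝ) ≤ 1 / 2 by norm_num)
      (by norm_num)
    simp only [smul_eq_mul] at this
    calc g ((a + b) / 2) = g (1 / 2 * x + 1 / 2 * (a + b - x)) := by ring_nf
      _ ≤ _ := this
      _ = _ := by ring
  calc (b - a) * g ((a + b) / 2) = ∫ _ in a..b, g ((a + b) / 2) := by simp
    _ ≤ ∫ x in a..b, (g x + g (a + b - x)) / 2 :=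
        integral_mono_on hab intervalIntegrable_const ((hint.add hint').div_const 2) hpoint
    _ = ∫ x in a..b, g x := by
        rw [intervalIntegral.integral_div, integral_add hint hint', integral_comp_sub_left]
        simp

theorem integral_sub_midpoint_sq (a b : ℝ) :
    ∫ x in a..b, (x - (a + b) / 2) ^ 2 = (b - a) ^ 3 / 12 := by
  rw [integral_comp_sub_right (fun x => x ^ 2), integral_pow]
  ring

theorem mul_midpoint_add_le_integral {f f' f'' : ℝ → ℝ} {a b k : ℝ} (hab : a ≤ b)
    (hf : ContinuousOn f (Icc a b)) (hf' : ∀ x ∈ Ioo a b, HasDerivAt f (f' x) x)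
    (hf'' : ∀ x ∈ Ioo a b, HasDerivAt f' (f'' x) x) (hk : ∀ x ∈ Ioo a b, k ≤ f'' x) :
    (b - a) * f ((a + b) / 2) + k * (b - a) ^ 3 / 24 ≤ ∫ x in a..b, f x := by
  set m := (a + b) / 2
  have hconv : ConvexOn ℝ (Icc a b) (fun x => f x - k / 2 * (x - m) ^ 2) := by
    refine convexOn_of_hasDerivWithinAt2_nonneg (convex_Icc a b) (by fun_prop)
      (f' := fun x => f' x - k * (x - m)) (f'' := fun x => f'' x - k) ?_ ?_ ?_
    all_goals intro x hx; rw [interior_Icc] at hx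
    · have hsq : HasDerivAt (fun y => k / 2 * (y - m) ^ 2) (k * (x - m)) x :=
        ((((hasDerivAt_id' x).sub_const m).fun_pow 2).const_mul (k / 2)).congr_deriv (by ring)
      exact ((hf' x hx).sub hsq).hasDerivWithinAt
    · have hlin : HasDerivAt (fun y => k * (y - m)) k x := by
        simpa using ((hasDerivAt_id' x).sub_const m).const_mul k
      exact ((hf'' x hx).sub hlin).hasDerivWithinAt
    · linarith [hk x hx]
  have hint : IntervalIntegrable f volume a b :=
    (hf.mono (uIcc_of_le hab).subset).intervalIntegrable
  have hsq : IntervalIntegrable (fun x => k / 2 * (x - m) ^ 2) volume a b := by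
    apply Continuous.intervalIntegrable; fun_prop
  have := hconv.mul_midpoint_le_integral hab (hint.sub hsq)
  rw [integral_sub hint hsq, intervalIntegral.integral_const_mul, integral_sub_midpoint_sq,
    show (a + b) / 2 - m = 0 from sub_self _] at this
  linarith

theorem integral_le_mul_midpoint_add {f f' f'' : ℝ → ℝ} {a b K : ℝ} (hab : a ≤ b)
    (hf : ContinuousOn f (Icc a b)) (hf' : ∀ x ∈ Ioo a b, HasDerivAt f (f' x) x)
    (hf'' : ∀ x ∈ Ioo a b, HasDerivAt f' (f'' x) x) (hK : ∀ x ∈ Ioo a b, f'' x ≤ K) :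
    ∫ x in a..b, f x ≤ (b - a) * f ((a + b) / 2) + K * (b - a) ^ 3 / 24 := by
  have := mul_midpoint_add_le_integral (f := fun x => -f x) (f' := fun x => -f' x)
    (f'' := fun x => -f'' x) (k := -K) hab hf.neg (fun x hx => (hf' x hx).neg)
    (fun x hx => (hf'' x hx).neg) (fun x hx => neg_le_neg (hK x hx))
  rw [intervalIntegral.integral_neg] at this
  linarith

theorem Real.rpow_midpoint_bounds {p x : ℝ} (hp0 : 0 < p) (hp1 : p ≤ 1) (hx : 1 ≤ x) :
    (x - 1) * ((x + 1) / 2) ^ (p - 1) + (p - 1) * (p - 2) * x ^ (p - 3) * (x - 1) ^ 3 / 24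
        ≤ (x ^ p - 1) / p ∧
      (x ^ p - 1) / p
        ≤ (x - 1) * ((x + 1) / 2) ^ (p - 1) + (p - 1) * (p - 2) * (x - 1) ^ 3 / 24 := by
  have hne : ∀ t ∈ Ioo 1 x, t ≠ 0 := fun t ht => (zero_lt_one.trans ht.1).ne'
  have hint : ∫ t in (1 : ℝ)..x, t ^ (p - 1) = (x ^ p - 1) / p := by
    rw [integral_rpow (Or.inl (by linarith)), sub_add_cancel, Real.one_rpow]
  have hf : ContinuousOn (fun t : ℝ => t ^ (p - 1)) (Icc 1 x) := fun t ht =>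
    (Real.continuousAt_rpow_const t _ (Or.inl (by linarith [ht.1]))).continuousWithinAt
  have hf' : ∀ t ∈ Ioo 1 x, HasDerivAt (fun t : ℝ => t ^ (p - 1)) ((p - 1) * t ^ (p - 2)) t :=
    fun t ht => (Real.hasDerivAt_rpow_const (Or.inl (hne t ht))).congr_deriv (by ring_nf)
  have hf'' : ∀ t ∈ Ioo 1 x, HasDerivAt (fun t : ℝ => (p - 1) * t ^ (p - 2))
      ((p - 1) * (p - 2) * t ^ (p - 3)) t := fun t ht =>
    ((Real.hasDerivAt_rpow_const (Or.inl (hne t ht))).const_mul (p - 1)).congr_deriv (by ring_nf)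
  have hpp : 0 ≤ (p - 1) * (p - 2) := by nlinarith
  have hlo := mul_midpoint_add_le_integral hx hf hf' hf'' fun t ht =>
    mul_le_mul_of_nonneg_left
      (Real.rpow_le_rpow_of_nonpos (by linarith [ht.1]) ht.2.le (by linarith)) hpp
  have hhi := integral_le_mul_midpoint_add hx hf hf' hf'' (K := (p - 1) * (p - 2)) fun t ht =>
    mul_le_of_le_one_right hpp (Real.rpow_le_one_of_one_le_of_nonpos ht.1.le (by linarith))
  rw [hint, add_comm 1 x] at hlo hhi
  exact ⟨hlo, hhi⟩

end Midpoint

lemma Real.rpow_sub_three_mul_sub_one_pow_three {x : ℝ} (hx : 0 < x) (p : ℝ) :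
    x ^ (p - 3) * (x - 1) ^ 3 = x ^ p - 3 * x ^ (p - 1) + 3 * x ^ (p - 2) - x ^ (p - 3) := by
  have h (k : ℕ) : x ^ (p - 3 + k) = x ^ (p - 3) * x ^ k := by
    rw [Real.rpow_add hx, Real.rpow_natCast]
  have h3 : x ^ p = x ^ (p - 3) * x ^ 3 := by simpa using h 3
  have h2 : x ^ (p - 1) = x ^ (p - 3) * x ^ 2 := by convert h 2 using 2; push_cast; ring
  have h1 : x ^ (p - 2) = x ^ (p - 3) * x := by convert h 1 using 2 <;> push_cast <;> ring
  rw [h3, h2, h1]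
  ring

open scoped MatrixOrder

section Perspective

variable {n : Type*} [Fintype n] [DecidableEq n]

lemma Matrix.continuousOn_spectrum (f : ℝ → ℝ) (C : Matrix n n ℂ) :
    ContinuousOn f (spectrum ℝ C) :=
  C.finite_real_spectrum.continuousOn f

lemma isHermitian_mrpow (A : Matrix n n ℂ) (r : ℝ) : (mrpow A r).IsHermitian :=
  cfc_predicate _ A

lemma mrpow_mul_mrpow {A : Matrix n n ℂ} (hA : A.PosDef) (r s : ℝ) :
    mrpow A r * mrpow A s = mrpow A (r + s) := by
  have hspec := (StarOrderedRing.isStrictlyPositive_iff_spectrum_pos (R := ℝ) A).1 hA.isStrictlyPositive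
  rw [mrpow, mrpow, mrpow, ← cfc_mul _ _ A (A.continuousOn_spectrum _) (A.continuousOn_spectrum _)]
  exact cfc_congr fun x hx => (Real.rpow_add (hspec x hx) r s).symm

lemma mrpow_zero {A : Matrix n n ℂ} (hA : A.IsHermitian) : mrpow A 0 = 1 := by
  simp only [mrpow, Real.rpow_zero]
  exact cfc_const_one ℝ A hA.isSelfAdjoint

lemma mrpow_one {A : Matrix n n ℂ} (hA : A.IsHermitian) : mrpow A 1 = A := by
  simp only [mrpow, Real.rpow_one]
  exact cfc_id' ℝ A hA.isSelfAdjoint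

noncomputable def invSqrtConj (A B : Matrix n n ℂ) : Matrix n n ℂ :=
  mrpow A (-(1 / 2)) * B * mrpow A (-(1 / 2))

noncomputable def opPerspective (A B : Matrix n n ℂ) (f : ℝ → ℝ) : Matrix n n ℂ :=
  mrpow A (1 / 2) * cfc f (invSqrtConj A B) * mrpow A (1 / 2)

variable {A B : Matrix n n ℂ}

lemma natu_eq_opPerspective (r : ℝ) : natu A B r = opPerspective A B (· ^ r) := rfl

lemma opPerspective_add (f g : ℝ → ℝ) :
    opPerspective A B (fun x => f x + g x) = opPerspective A B f + opPerspective A B g := by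
  rw [opPerspective, cfc_add _ f g (Matrix.continuousOn_spectrum _ _)
    (Matrix.continuousOn_spectrum _ _), mul_add, add_mul]
  rfl

lemma opPerspective_sub (f g : ℝ → ℝ) :
    opPerspective A B (fun x => f x - g x) = opPerspective A B f - opPerspective A B g := by
  rw [opPerspective, cfc_sub f g _ (Matrix.continuousOn_spectrum _ _)
    (Matrix.continuousOn_spectrum _ _), mul_sub, sub_mul]
  rfl

lemma opPerspective_const_mul (c : ℝ) (f : ℝ → ℝ) :
    opPerspective A B (fun x => c * f x) = c • opPerspective A B f := by
  rw [opPerspective, cfc_const_mul c f _ (Matrix.continuousOn_spectrum _ _), mul_smul_comm,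
    smul_mul_assoc]
  rfl

lemma isHermitian_invSqrtConj (hB : B.IsHermitian) : (invSqrtConj A B).IsHermitian := by
  have := isHermitian_conjTranspose_mul_mul (mrpow A (-(1 / 2))) hB
  rwa [(isHermitian_mrpow A _).eq] at this

lemma opPerspective_const_one (hA : A.PosDef) (hB : B.IsHermitian) :
    opPerspective A B (fun _ => 1) = A := by
  rw [opPerspective, cfc_const_one ℝ _ (isHermitian_invSqrtConj hB).isSelfAdjoint, mul_one,
    mrpow_mul_mrpow hA]
  norm_num [mrpow_one hA.1]

lemma opPerspective_id (hA : A.PosDef) (hB : B.IsHermitian) :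
    opPerspective A B (fun x => x) = B := by
  rw [opPerspective, cfc_id' ℝ _ (isHermitian_invSqrtConj hB).isSelfAdjoint, invSqrtConj]
  simp only [← mul_assoc, mrpow_mul_mrpow hA]
  simp only [mul_assoc, mrpow_mul_mrpow hA]
  norm_num [mrpow_zero hA.1]

lemma Kp_eq_opPerspective (hB : B.IsHermitian) (p : ℝ) :
    Kp A B p = opPerspective A B (fun x => ((x + 1) / 2) ^ (p - 1) * (x - 1)) := by
  have hC := (isHermitian_invSqrtConj (A := A) hB).isSelfAdjoint
  have hcont (f : ℝ → ℝ) := Matrix.continuousOn_spectrum f (invSqrtConj A B)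
  have hmid : (1 / 2 : ℝ) • (invSqrtConj A B + 1)
      = cfc (fun x : ℝ => (x + 1) / 2) (invSqrtConj A B) := by
    simp_rw [div_eq_inv_mul]
    rw [cfc_const_mul _ _ _ (hcont _), cfc_add_const _ _ _ (hcont _) hC, cfc_id' ℝ _ hC, map_one]
    norm_num
  have hsub : invSqrtConj A B - 1 = cfc (fun x : ℝ => x - 1) (invSqrtConj A B) := by
    rw [cfc_sub (fun x : ℝ => x) (fun _ => 1) _ (hcont _) (hcont _), cfc_id' ℝ _ hC,
      cfc_const_one ℝ _ hC]
  have hpow : mrpow (cfc (fun x : ℝ => (x + 1) / 2) (invSqrtConj A B)) (p - 1)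
      = cfc (fun x : ℝ => ((x + 1) / 2) ^ (p - 1)) (invSqrtConj A B) :=
    (cfc_comp' (fun t : ℝ => t ^ (p - 1)) _ _ ((Set.toFinite _).continuousOn _)).symm
  change _ * mrpow ((1 / 2 : ℝ) • (invSqrtConj A B + 1)) (p - 1) * (invSqrtConj A B - 1) * _ = _
  rw [hmid, hsub, hpow, mul_assoc (mrpow A _), ← cfc_mul _ _ _ (hcont _) (hcont _)]
  rfl

lemma loe_opPerspective {f g : ℝ → ℝ} (h : ∀ x ∈ spectrum ℝ (invSqrtConj A B), f x ≤ g x) :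
    loe (opPerspective A B f) (opPerspective A B g) := by
  have : 0 ≤ cfc (fun x => g x - f x) (invSqrtConj A B) :=
    cfc_nonneg fun x hx => sub_nonneg.2 (h x hx)
  rw [loe, ← opPerspective_sub, opPerspective]
  simpa only [(isHermitian_mrpow A (1 / 2)).eq] using
    (Matrix.nonneg_iff_posSemidef.1 this).conjTranspose_mul_mul_same (mrpow A (1 / 2))

lemma one_le_of_mem_spectrum_invSqrtConj (hA : A.PosDef) (hB : B.IsHermitian) (hAB : loe A B) :
    ∀ x ∈ spectrum ℝ (invSqrtConj A B), 1 ≤ x := by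
  have hconj : mrpow A (-(1 / 2)) * A * mrpow A (-(1 / 2)) = 1 := by
    calc _ = mrpow A (-(1 / 2)) * mrpow A 1 * mrpow A (-(1 / 2)) := by rw [mrpow_one hA.1]
      _ = 1 := by norm_num [mrpow_mul_mrpow hA, mrpow_zero hA.1]
  have hsub : invSqrtConj A B - 1 = (mrpow A (-(1 / 2)))ᴴ * (B - A) * mrpow A (-(1 / 2)) := by
    rw [(isHermitian_mrpow A _).eq, mul_sub, sub_mul, hconj, invSqrtConj]
  have h1 : algebraMap ℝ (Matrix n n ℂ) 1 ≤ invSqrtConj A B := by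
    rw [map_one, Matrix.le_iff, hsub]
    exact hAB.conjTranspose_mul_mul_same _
  exact (algebraMap_le_iff_le_spectrum (isHermitian_invSqrtConj hB).isSelfAdjoint).1 h1

lemma tsallisEntropy_eq_opPerspective (hA : A.PosDef) (hB : B.IsHermitian) (p : ℝ) :
    TsallisEntropy A B p = opPerspective A B (fun x => 1 / p * (x ^ p - 1)) := by
  rw [opPerspective_const_mul, opPerspective_sub, opPerspective_const_one hA hB]
  rfl

lemma Lp_add_Kp_eq_opPerspective (hB : B.IsHermitian) (p : ℝ) :
    Lp A B p + Kp A B p = opPerspective A B (fun x => 1 / 24 * (p - 1) * (p - 2) *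
      (x ^ p - 3 * x ^ (p - 1) + 3 * x ^ (p - 2) - x ^ (p - 3)) +
        ((x + 1) / 2) ^ (p - 1) * (x - 1)) := by
  simp only [opPerspective_add, opPerspective_sub, opPerspective_const_mul,
    ← natu_eq_opPerspective, ← Kp_eq_opPerspective hB]
  rfl

lemma Rp_add_Kp_eq_opPerspective (hA : A.PosDef) (hB : B.IsHermitian) (p : ℝ) :
    Rp A B p + Kp A B p = opPerspective A B (fun x => 1 / 24 * (p - 1) * (p - 2) *
      (x ^ (3 : ℝ) - 3 * x ^ (2 : ℝ) + 3 * x - 1) + ((x + 1) / 2) ^ (p - 1) * (x - 1)) := by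
  simp only [opPerspective_add, opPerspective_sub, opPerspective_const_mul,
    ← natu_eq_opPerspective, ← Kp_eq_opPerspective hB, opPerspective_const_mul 3 (fun x => x),
    opPerspective_id hA hB, opPerspective_const_one hA hB]
  rfl

end Perspective

theorem stmt10_general {n : Type*} [Fintype n] [DecidableEq n] {A B : Matrix n n ℂ}
    (hA : A.PosDef) (hAB : loe A B)
    {p : ℝ} (hp0 : 0 < p) (hp1 : p ≤ 1) :
    loe (Lp A B p + Kp A B p) (TsallisEntropy A B p) ∧
    loe (TsallisEntropy A B p) (Rp A B p + Kp A B p) := by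
  have hB : B.IsHermitian := by simpa using hA.1.add hAB.1
  have hspec := one_le_of_mem_spectrum_invSqrtConj hA hB hAB
  rw [tsallisEntropy_eq_opPerspective hA hB, Lp_add_Kp_eq_opPerspective hB,
    Rp_add_Kp_eq_opPerspective hA hB]
  refine ⟨loe_opPerspective fun x hx => ?_, loe_opPerspective fun x hx => ?_⟩ <;>
    obtain ⟨hlo, hhi⟩ := Real.rpow_midpoint_bounds hp0 hp1 (hspec x hx) <;>
    rw [one_div_mul_eq_div p]
  · rw [← Real.rpow_sub_three_mul_sub_one_pow_three (by linarith [hspec x hx])]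
    linarith
  · simp only [Real.rpow_ofNat]
    linarith

theorem stmt10 {n : Type*} [Fintype n] [DecidableEq n] {A B : Matrix n n ℂ}
    (hA : A.PosDef) (hB : B.PosDef) (hAB : loe A B)
    {p : ℝ} (hp0 : 0 < p) (hp1 : p ≤ 1) :
    loe (Lp A B p + Kp A B p) (TsallisEntropy A B p) ∧
    loe (TsallisEntropy A B p) (Rp A B p + Kp A B p) :=
  stmt10_general hA hAB hp0 hp1
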